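/- arXiv:0808.3438 — 4 statements merged into one kernel-verified Lean document; each statement's English description precedes it below -/
import Mathlib

section
/- The function g defined by g(η) = (1/η²)(1/cosh²η − tanh(η)/η) for η > 0 satisfies g(η) < 0 for all η ≥ 0 (with g(0) = −2/3). -/
/-! Since `tanh η / η = sinh η / (η cosh η)`, for `η > 0` the bracket `1 / cosh² η - tanh η / η`
is negative exactly when `η < sinh η cosh η = sinh (2η) / 2`, which is `t < sinh t` at `t = 2η`. -/

open Real

noncomputable def gBCS : ℝ → ℝ := fun η =>
  if η = 0 then -2/3 else (1/η^2) * (1/(Real.cosh η)^2 - Real.tanh η / η)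

namespace Real

theorem self_lt_sinh_mul_cosh {x : ℝ} (hx : 0 < x) : x < sinh x * cosh x := by
  have h : 2 * x < sinh (2 * x) := self_lt_sinh_iff.2 (by positivity)
  rw [sinh_two_mul] at h
  linarith

theorem one_div_cosh_sq_lt_tanh_div {x : ℝ} (hx : 0 < x) : 1 / cosh x ^ 2 < tanh x / x := by
  have hc : 0 < cosh x := cosh_pos x
  rw [tanh_eq_sinh_div_cosh, div_div, div_lt_div_iff₀ (by positivity) (by positivity)]
  nlinarith [self_lt_sinh_mul_cosh hx]

end Real

/-- `g η < 0` for all `η ≥ 0`. -/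
theorem gBCS_neg : ∀ η : ℝ, 0 ≤ η → gBCS η < 0 := by
  intro η hη
  rcases hη.eq_or_lt with rfl | hpos
  · norm_num [gBCS]
  · rw [gBCS, if_neg hpos.ne']
    exact mul_neg_of_pos_of_neg (by positivity) (sub_neg.2 (one_div_cosh_sq_lt_tanh_div hpos))
end

section
/- The function G defined by G(η) = (1/η²)(3g(η) + 2 tanh(η)/(η cosh²η)) for η > 0, where g(η) = (1/η²)(1/cosh²η − tanh(η)/η), extends continuously to 0 with G(0) = −16/15. -/
/-!
Clearing denominators, `η⁵ cosh³ η · G(η) = N(η)` with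
`N(η) = 3η cosh η + 2η² sinh η - (3/4)(sinh η + sinh 3η)` (using `4 sinh η cosh² η = sinh η + sinh 3η`).
The derivatives of `N` stay in a family of the same shape, `N⁽ᵏ⁾(0) = 0` for `k < 5` and
`N⁽⁵⁾(0) = -128`, so five applications of L'Hôpital's rule give `N(η)/η⁵ → -128/5! = -16/15`.
-/

open Real Filter

noncomputable def GBCS : ℝ → ℝ := fun η =>
  (1/η^2) * (3 * gBCS η + 2 * Real.tanh η / (η * (Real.cosh η)^2))

open Topology Nat

theorem tendsto_div_pow_nhdsGT_zero_of_hasDerivAt {f : ℕ → ℝ → ℝ} {n : ℕ}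
    (hf : ∀ k < n, ∀ x, HasDerivAt (f k) (f (k + 1) x) x)
    (hf0 : ∀ k < n, f k 0 = 0) (hcont : ContinuousAt (f n) 0) :
    Tendsto (fun x => f 0 x / x ^ n) (𝓝[>] 0) (𝓝 (f n 0 / n !)) := by
  induction n generalizing f with
  | zero => simpa using hcont.tendsto.mono_left nhdsWithin_le_nhds
  | succ n ih =>
    have hdiv : Tendsto (fun x => f 1 x / x ^ n) (𝓝[>] 0) (𝓝 (f (n + 1) 0 / n !)) :=
      ih (f := fun k => f (k + 1)) (fun k hk => hf (k + 1) (by omega))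
        (fun k hk => hf0 (k + 1) (by omega)) hcont
    have hf_lim : Tendsto (f 0) (𝓝[>] 0) (𝓝 0) := by
      simpa [hf0 0 n.succ_pos] using
        (hf 0 n.succ_pos 0).continuousAt.tendsto.mono_left nhdsWithin_le_nhds
    have hpow_lim : Tendsto (fun x : ℝ => x ^ (n + 1)) (𝓝[>] 0) (𝓝 0) := by
      simpa using ((continuous_pow (n + 1)).tendsto (0 : ℝ)).mono_left nhdsWithin_le_nhds
    refine HasDerivAt.lhopital_zero_nhdsGT (g' := fun x => ((n + 1 : ℕ) : ℝ) * x ^ n)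
      (Eventually.of_forall (hf 0 n.succ_pos)) (Eventually.of_forall fun x => ?_) ?_
      hf_lim hpow_lim ?_
    · simpa using hasDerivAt_pow (n + 1) x
    · filter_upwards [self_mem_nhdsWithin] with x (hx : 0 < x)
      positivity
    · convert hdiv.div_const ((n + 1 : ℕ) : ℝ) using 1
      · ext x
        rw [div_div, mul_comm]
      · rw [factorial_succ]
        push_cast
        field_simp

theorem hasDerivAt_iteratedDeriv_sinh (k : ℕ) (x : ℝ) :
    HasDerivAt (iteratedDeriv k sinh) (iteratedDeriv (k + 1) sinh x) x := by
  rw [iteratedDeriv_succ]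
  exact (differentiable_iteratedDeriv_sinh k x).hasDerivAt

theorem iteratedDeriv_add_two_sinh (k : ℕ) :
    iteratedDeriv (k + 2) sinh = iteratedDeriv k sinh := by
  simp

/-- `gbcsNumerator k` is the `k`-th derivative of `gbcsNumerator 0 η = η⁵ cosh³ η · GBCS η`. -/
noncomputable def gbcsNumerator (k : ℕ) (x : ℝ) : ℝ :=
  (2 * k ^ 2 + k - 3 / 4) * iteratedDeriv k sinh x
    + (4 * k + 3) * x * iteratedDeriv (k + 1) sinh x
    + 2 * x ^ 2 * iteratedDeriv k sinh x - 3 ^ (k + 1) / 4 * iteratedDeriv k sinh (3 * x)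

theorem hasDerivAt_gbcsNumerator (k : ℕ) (x : ℝ) :
    HasDerivAt (gbcsNumerator k) (gbcsNumerator (k + 1) x) x := by
  have hs := hasDerivAt_iteratedDeriv_sinh
  have h3 : HasDerivAt (fun y => iteratedDeriv k sinh (3 * y))
      (iteratedDeriv (k + 1) sinh (3 * x) * 3) x :=
    ((hs k (3 * x)).comp x ((hasDerivAt_id x).const_mul 3)).congr_deriv (by simp)
  refine (((((hs k x).const_mul (2 * (k : ℝ) ^ 2 + k - 3 / 4)).add
    (((hasDerivAt_id x).const_mul (4 * (k : ℝ) + 3)).mul (hs (k + 1) x))).add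
    (((hasDerivAt_pow 2 x).const_mul 2).mul (hs k x))).sub
    (h3.const_mul (3 ^ (k + 1) / 4))).congr_deriv ?_
  simp only [gbcsNumerator, iteratedDeriv_add_two_sinh, id]
  push_cast
  ring

theorem gbcsNumerator_apply_zero (k : ℕ) :
    gbcsNumerator k 0 = (2 * k ^ 2 + k - 3 / 4 - 3 ^ (k + 1) / 4) * iteratedDeriv k sinh 0 := by
  simp only [gbcsNumerator]
  ring_nf

theorem gbcsNumerator_apply_zero_of_lt_five {k : ℕ} (hk : k < 5) : gbcsNumerator k 0 = 0 := by
  interval_cases k <;> norm_num [gbcsNumerator_apply_zero]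

theorem gbcsNumerator_five_apply_zero : gbcsNumerator 5 0 = -128 := by
  norm_num [gbcsNumerator_apply_zero]

theorem GBCS_eq_gbcsNumerator_div {x : ℝ} (hx : x ≠ 0) :
    GBCS x = gbcsNumerator 0 x / x ^ 5 / cosh x ^ 3 := by
  simp only [GBCS, gBCS, if_neg hx, gbcsNumerator, zero_add, iteratedDeriv_zero, iteratedDeriv_one,
    Real.deriv_sinh, tanh_eq_sinh_div_cosh, sinh_three_mul]
  field_simp
  linear_combination -12 * sinh x * cosh_sq x

/-- `G` extends continuously to `0` with value `−16/15`: `G η → −16/15` as `η → 0⁺`. -/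
theorem GBCS_tendsto_zero_right :
    Tendsto GBCS (nhdsWithin 0 (Set.Ioi 0)) (nhds (-16/15)) := by
  have hnum : Tendsto (fun x => gbcsNumerator 0 x / x ^ 5) (𝓝[>] 0) (𝓝 (-16 / 15)) := by
    have h := tendsto_div_pow_nhdsGT_zero_of_hasDerivAt (n := 5)
      (fun k _ => hasDerivAt_gbcsNumerator k) (fun k => gbcsNumerator_apply_zero_of_lt_five)
      (hasDerivAt_gbcsNumerator 5 0).continuousAt
    rw [gbcsNumerator_five_apply_zero] at h
    convert h using 2
    norm_num [factorial]
  have hcosh : Tendsto (fun x => cosh x ^ 3) (𝓝[>] 0) (𝓝 1) :=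
    ((continuous_cosh.pow 3).tendsto' 0 1 (by simp)).mono_left nhdsWithin_le_nhds
  have hG := hnum.div hcosh one_ne_zero
  rw [div_one] at hG
  refine hG.congr' ?_
  filter_upwards [self_mem_nhdsWithin] with x (hx : (0 : ℝ) < x)
  exact (GBCS_eq_gbcsNumerator_div hx.ne').symm
end

section
/- Fix T with 0 < T ≤ T_c, and define F(T,Y) = ∫_{2k_B T_c ε}^{ℏω_D} (1/√(ξ²+Y)) tanh(√(ξ²+Y)/(2k_B T)) dξ − 1/(U₀N₀). Then the partial derivative ∂F/∂Y exists on Y > 0 and equals (1/(2(2k_B T)³)) ∫_{2k_B T_c ε}^{ℏω_D} g(√(ξ²+Y)/(2k_B T)) dξ, where g(η) = (1/η²)(1/cosh²η − tanh(η)/η). -/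
/-!
With `c = 2 k_B T` and `η = √(ξ² + Y) / c`, the integrand is `c⁻¹ h(η)` where
`h(η) = tanh η / η`. Since `h'(η) = η g(η)` and `dη/dY = 1 / (2 c² η)`, its `Y`-derivative is
`g(η) / (2 c³)`. For `Y > Y₀ / 2` we have `η ≥ √(Y₀ / 2) / c`, where `|g|` is bounded, so
differentiation under the integral sign is justified by dominated convergence.
-/

open Real intervalIntegral

namespace Real

theorem hasDerivAt_tanh (x : ℝ) : HasDerivAt tanh (1 / cosh x ^ 2) x := by
  have h := (hasDerivAt_sinh x).div (hasDerivAt_cosh x) (cosh_pos x).ne'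
  rw [← sq, ← sq, cosh_sq_sub_sinh_sq] at h
  exact h.congr_of_eventuallyEq (.of_forall fun y => tanh_eq_sinh_div_cosh y)

@[fun_prop]
theorem continuous_tanh : Continuous tanh :=
  continuous_iff_continuousAt.2 fun x => (hasDerivAt_tanh x).continuousAt

end Real

attribute [fun_prop] Real.continuous_cosh

theorem gBCS_of_ne_zero {η : ℝ} (hη : η ≠ 0) :
    gBCS η = 1 / η ^ 2 * (1 / cosh η ^ 2 - tanh η / η) :=
  if_neg hη

theorem continuousAt_gBCS {η : ℝ} (hη : η ≠ 0) : ContinuousAt gBCS η := by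
  have hcont : ContinuousAt (fun x => 1 / x ^ 2 * (1 / cosh x ^ 2 - tanh x / x)) η := by
    have := (cosh_pos η).ne'
    fun_prop (disch := positivity)
  refine hcont.congr (Filter.eventuallyEq_of_mem (isOpen_ne.mem_nhds hη) fun x hx => ?_)
  exact (gBCS_of_ne_zero hx).symm

theorem abs_gBCS_le {η₀ η : ℝ} (hη₀ : 0 < η₀) (hη : η₀ ≤ η) :
    |gBCS η| ≤ 1 / η₀ ^ 2 * (1 + 1 / η₀) := by
  have hηpos : 0 < η := hη₀.trans_le hη
  rw [gBCS_of_ne_zero hηpos.ne', abs_mul, abs_of_pos (by positivity : (0 : ℝ) < 1 / η ^ 2)]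
  have hsech : |1 / cosh η ^ 2| ≤ 1 := by
    rw [abs_of_pos (by positivity), div_le_one (by positivity)]
    nlinarith [one_le_cosh η]
  have htanh : |tanh η / η| ≤ 1 / η₀ := by
    rw [abs_div, abs_of_pos hηpos]
    calc |tanh η| / η ≤ 1 / η := by gcongr; exact (abs_tanh_lt_one η).le
      _ ≤ 1 / η₀ := by gcongr
  gcongr
  exact (abs_sub _ _).trans (add_le_add hsech htanh)

theorem hasDerivAt_tanh_div_self {η : ℝ} (hη : η ≠ 0) :
    HasDerivAt (fun x => tanh x / x) (η * gBCS η) η := by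
  refine ((hasDerivAt_tanh η).div (hasDerivAt_id' η) hη).congr_deriv ?_
  rw [gBCS_of_ne_zero hη]
  field_simp

noncomputable def gapIntegrand (c Y ξ : ℝ) : ℝ :=
  1 / √(ξ ^ 2 + Y) * tanh (√(ξ ^ 2 + Y) / c)

theorem gapIntegrand_eq (c Y ξ : ℝ) :
    gapIntegrand c Y ξ = c⁻¹ * (tanh (√(ξ ^ 2 + Y) / c) / (√(ξ ^ 2 + Y) / c)) := by
  rcases eq_or_ne c 0 with rfl | hc
  · simp [gapIntegrand]
  · rw [gapIntegrand]
    field_simp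

theorem continuous_gapIntegrand {c Y : ℝ} (hY : 0 < Y) : Continuous (gapIntegrand c Y) := by
  have hs : ∀ ξ : ℝ, √(ξ ^ 2 + Y) ≠ 0 := fun ξ => (sqrt_pos.2 (by positivity)).ne'
  unfold gapIntegrand
  exact (continuous_const.div (by fun_prop) hs).mul
    (continuous_tanh.comp (by fun_prop))

theorem continuous_gBCS_sqrt {c Y : ℝ} (hc : 0 < c) (hY : 0 < Y) :
    Continuous fun ξ => gBCS (√(ξ ^ 2 + Y) / c) :=
  continuous_iff_continuousAt.2 fun ξ =>
    (continuousAt_gBCS (by positivity)).comp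
      (by fun_prop : Continuous fun ξ => √(ξ ^ 2 + Y) / c).continuousAt

theorem hasDerivAt_gapIntegrand {c Y : ℝ} (ξ : ℝ) (hc : 0 < c) (hY : 0 < Y) :
    HasDerivAt (fun Y => gapIntegrand c Y ξ) (1 / (2 * c ^ 3) * gBCS (√(ξ ^ 2 + Y) / c)) Y := by
  have hη : HasDerivAt (fun Y => √(ξ ^ 2 + Y) / c) (1 / (2 * √(ξ ^ 2 + Y)) / c) Y := by
    have := ((hasDerivAt_id Y).const_add (ξ ^ 2)).sqrt (by positivity)
    simpa using this.div_const c
  have h := ((hasDerivAt_tanh_div_self (by positivity)).comp Y hη).const_mul c⁻¹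
  refine (h.congr_deriv ?_).congr_of_eventuallyEq (.of_forall fun Y => gapIntegrand_eq c Y ξ)
  field_simp

theorem hasDerivAt_integral_gapIntegrand {c Y : ℝ} (a b : ℝ) (hc : 0 < c) (hY : 0 < Y) :
    HasDerivAt (fun Y => ∫ ξ in a..b, gapIntegrand c Y ξ)
      (1 / (2 * c ^ 3) * ∫ ξ in a..b, gBCS (√(ξ ^ 2 + Y) / c)) Y := by
  set η₀ := √(Y / 2) / c
  have hη₀ : 0 < η₀ := div_pos (sqrt_pos.2 (by positivity)) hc
  have hbound : ∀ ξ, ∀ x ∈ Set.Ioi (Y / 2),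
      ‖1 / (2 * c ^ 3) * gBCS (√(ξ ^ 2 + x) / c)‖ ≤
        1 / (2 * c ^ 3) * (1 / η₀ ^ 2 * (1 + 1 / η₀)) := by
    intro ξ x hx
    rw [norm_mul, Real.norm_of_nonneg (by positivity), Real.norm_eq_abs]
    gcongr
    refine abs_gBCS_le hη₀ (div_le_div_of_nonneg_right (sqrt_le_sqrt ?_) hc.le)
    nlinarith [sq_nonneg ξ, hx.out]
  have hpos : ∀ x ∈ Set.Ioi (Y / 2), 0 < x := fun x hx => lt_trans (by positivity) hx
  rw [← integral_const_mul]
  refine (hasDerivAt_integral_of_dominated_loc_of_deriv_le (Ioi_mem_nhds (half_lt_self hY))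
    ?_ ((continuous_gapIntegrand hY).intervalIntegrable a b)
    ((continuous_const.mul (continuous_gBCS_sqrt hc hY)).aestronglyMeasurable)
    (.of_forall fun ξ _ => hbound ξ) intervalIntegrable_const
    (.of_forall fun ξ _ x hx => hasDerivAt_gapIntegrand ξ hc (hpos x hx))).2
  filter_upwards [Ioi_mem_nhds (half_lt_self hY)] with x hx
  exact (continuous_gapIntegrand (hpos x hx)).aestronglyMeasurable

theorem F_hasDerivAt_Y_general
    (kB hbar ωD U0 N0 ε Tc T : ℝ)
    (hkB : 0 < kB) (hT : 0 < T) :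
    ∀ Y : ℝ, 0 < Y →
      HasDerivAt
        (fun Y => (∫ ξ in (2*kB*Tc*ε)..(hbar*ωD),
            (1/Real.sqrt (ξ^2+Y)) * Real.tanh (Real.sqrt (ξ^2+Y)/(2*kB*T)))
          - 1/(U0*N0))
        ((1/(2*(2*kB*T)^3)) * ∫ ξ in (2*kB*Tc*ε)..(hbar*ωD),
            gBCS (Real.sqrt (ξ^2+Y)/(2*kB*T)))
        Y := fun _ hY =>
  (hasDerivAt_integral_gapIntegrand _ _ (by positivity) hY).sub_const _

/-- For fixed `0 < T ≤ T_c`, the function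
`Y ↦ F(T,Y) = ∫_{2k_BT_cε}^{ℏω_D} (1/√(ξ²+Y)) tanh(√(ξ²+Y)/(2k_BT)) dξ − 1/(U₀N₀)`
is differentiable at every `Y > 0` with derivative
`(1/(2(2k_BT)³)) ∫_{2k_BT_cε}^{ℏω_D} g(√(ξ²+Y)/(2k_BT)) dξ`. -/
theorem F_hasDerivAt_Y
    (kB hbar ωD U0 N0 ε Tc T : ℝ)
    (hkB : 0 < kB) (hhbar : 0 < hbar) (hωD : 0 < ωD)
    (hU0 : 0 < U0) (hN0 : 0 < N0) (hε : 0 < ε)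
    (hTc : 0 < Tc) (hT : 0 < T) (hTTc : T ≤ Tc) :
    ∀ Y : ℝ, 0 < Y →
      HasDerivAt
        (fun Y => (∫ ξ in (2*kB*Tc*ε)..(hbar*ωD),
            (1/Real.sqrt (ξ^2+Y)) * Real.tanh (Real.sqrt (ξ^2+Y)/(2*kB*T)))
          - 1/(U0*N0))
        ((1/(2*(2*kB*T)^3)) * ∫ ξ in (2*kB*Tc*ε)..(hbar*ωD),
            gBCS (Real.sqrt (ξ^2+Y)/(2*kB*T)))
        Y :=
  F_hasDerivAt_Y_general kB hbar ωD U0 N0 ε Tc T hkB hT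
end

section
/- Let Δ = √((ℏω_D − 2k_B T_c ε e^{1/(U₀N₀)})(ℏω_D − 2k_B T_c ε e^{−1/(U₀N₀)})) / sinh(1/(U₀N₀)), assuming ε small enough that ℏω_D > 2k_B T_c ε e^{1/(U₀N₀)}. Then ∫_{2k_B T_c ε}^{ℏω_D} dξ/√(ξ² + Δ²) = 1/(U₀N₀); i.e., F(0, Δ²) = 0 where F(0,Y) = ∫_{2k_B T_c ε}^{ℏω_D} dξ/√(ξ²+Y) − 1/(U₀N₀). -/
/-!
The integrand has the antiderivative `arsinh (ξ / Δ)`, so the claim is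
`arsinh (b / Δ) - arsinh (a / Δ) = t` with `a = 2 k_B T_c ε`, `b = ℏω_D`, `t = 1/(U₀N₀)`,
i.e. `b = a cosh t + √(a² + Δ²) sinh t`. This follows from the identity
`(b - a cosh t)² = (b - a eᵗ)(b - a e⁻ᵗ) + (a sinh t)²`, which by the choice of `Δ` says
`(b - a cosh t)² = (a² + Δ²) sinh² t`.
-/

open Real intervalIntegral

theorem integral_one_div_sqrt_sq_add_sq {c : ℝ} (hc : 0 < c) (a b : ℝ) :
    ∫ ξ in a..b, 1 / √(ξ ^ 2 + c ^ 2) = arsinh (b / c) - arsinh (a / c) := by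
  have hpos : ∀ x : ℝ, 0 < √(x ^ 2 + c ^ 2) := fun x => sqrt_pos.2 (by positivity)
  have hderiv : ∀ x ∈ Set.uIcc a b,
      HasDerivAt (fun ξ => arsinh (ξ / c)) (1 / √(x ^ 2 + c ^ 2)) x := by
    intro x _
    refine ((hasDerivAt_arsinh (x / c)).comp x ((hasDerivAt_id x).div_const c)).congr_deriv ?_
    have hsqrt : √(1 + (x / c) ^ 2) = √(x ^ 2 + c ^ 2) / c := by
      rw [show 1 + (x / c) ^ 2 = (x ^ 2 + c ^ 2) / c ^ 2 by field_simp; ring,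
        sqrt_div (by positivity), sqrt_sq hc.le]
    simp only [hsqrt]
    field_simp
  have hcont : Continuous fun x : ℝ => 1 / √(x ^ 2 + c ^ 2) :=
    continuous_const.div (by fun_prop) fun x => (hpos x).ne'
  exact integral_eq_sub_of_hasDerivAt hderiv (hcont.intervalIntegrable a b)

theorem arsinh_div_sub_arsinh_div_eq {a b c t : ℝ} (hc : 0 < c)
    (h : b = a * cosh t + √(a ^ 2 + c ^ 2) * sinh t) :
    arsinh (b / c) - arsinh (a / c) = t := by
  have hsqrt : √(1 + (a / c) ^ 2) = √(a ^ 2 + c ^ 2) / c := by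
    rw [show 1 + (a / c) ^ 2 = (a ^ 2 + c ^ 2) / c ^ 2 by field_simp; ring,
      sqrt_div (by positivity), sqrt_sq hc.le]
  have hsinh : b / c = sinh (arsinh (a / c) + t) := by
    rw [sinh_add, sinh_arsinh, cosh_arsinh, hsqrt, h]
    field_simp
  rw [hsinh, arsinh_sinh]
  ring

theorem sq_sub_mul_cosh (a b t : ℝ) :
    (b - a * cosh t) ^ 2 = (b - a * exp t) * (b - a * exp (-t)) + (a * sinh t) ^ 2 := by
  rw [cosh_eq, sinh_eq]
  ring

noncomputable def gap (a b t : ℝ) : ℝ :=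
  √((b - a * exp t) * (b - a * exp (-t))) / sinh t

theorem integral_one_div_sqrt_sq_add_gap_sq {a b t : ℝ} (ha : 0 ≤ a) (ht : 0 < t)
    (hab : a * exp t < b) :
    ∫ ξ in a..b, 1 / √(ξ ^ 2 + gap a b t ^ 2) = t := by
  have hsinh : 0 < sinh t := sinh_pos_iff.2 ht
  have hexp : exp (-t) < exp t := exp_lt_exp.2 (by linarith)
  have hcosh : cosh t < exp t := by rw [cosh_eq]; linarith
  have hprod : 0 < (b - a * exp t) * (b - a * exp (-t)) := by
    apply mul_pos <;> nlinarith [mul_le_mul_of_nonneg_left hexp.le ha]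
  have hgap : 0 < gap a b t := div_pos (sqrt_pos.2 hprod) hsinh
  have hnum : 0 ≤ b - a * cosh t := by nlinarith [mul_le_mul_of_nonneg_left hcosh.le ha]
  have hsq : a ^ 2 + gap a b t ^ 2 = ((b - a * cosh t) / sinh t) ^ 2 := by
    rw [gap, div_pow, div_pow, sq_sqrt hprod.le, sq_sub_mul_cosh]
    field_simp
    ring
  rw [integral_one_div_sqrt_sq_add_sq hgap]
  apply arsinh_div_sub_arsinh_div_eq hgap
  rw [hsq, sqrt_sq (div_nonneg hnum hsinh.le), div_mul_cancel₀ _ hsinh.ne']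
  ring

theorem F_zero_at_Delta_sq_general
    (kB hbar ωD U0 N0 ε Tc : ℝ)
    (hkB : 0 < kB)
    (hU0 : 0 < U0) (hN0 : 0 < N0) (hε : 0 < ε) (hTc : 0 < Tc)
    (hsmall : 2*kB*Tc*ε * Real.exp (1/(U0*N0)) < hbar*ωD) :
    (∫ ξ in (2*kB*Tc*ε)..(hbar*ωD),
        1/Real.sqrt (ξ^2 +
          (Real.sqrt ((hbar*ωD - 2*kB*Tc*ε * Real.exp (1/(U0*N0))) *
              (hbar*ωD - 2*kB*Tc*ε * Real.exp (-(1/(U0*N0))))) /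
            Real.sinh (1/(U0*N0)))^2))
      = 1/(U0*N0) :=
  integral_one_div_sqrt_sq_add_gap_sq (by positivity) (by positivity) hsmall

/-- With `Δ = √((ℏω_D − 2k_BT_cε e^{1/(U₀N₀)})(ℏω_D − 2k_BT_cε e^{−1/(U₀N₀)}))/sinh(1/(U₀N₀))`,
one has `F(0,Δ²) = 0`, i.e. `∫_{2k_BT_cε}^{ℏω_D} dξ/√(ξ²+Δ²) = 1/(U₀N₀)`. -/
theorem F_zero_at_Delta_sq
    (kB hbar ωD U0 N0 ε Tc : ℝ)
    (hkB : 0 < kB) (hhbar : 0 < hbar) (hωD : 0 < ωD)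
    (hU0 : 0 < U0) (hN0 : 0 < N0) (hε : 0 < ε) (hTc : 0 < Tc)
    (hsmall : 2*kB*Tc*ε * Real.exp (1/(U0*N0)) < hbar*ωD) :
    (∫ ξ in (2*kB*Tc*ε)..(hbar*ωD),
        1/Real.sqrt (ξ^2 +
          (Real.sqrt ((hbar*ωD - 2*kB*Tc*ε * Real.exp (1/(U0*N0))) *
              (hbar*ωD - 2*kB*Tc*ε * Real.exp (-(1/(U0*N0))))) /
            Real.sinh (1/(U0*N0)))^2))
      = 1/(U0*N0) :=
  F_zero_at_Delta_sq_general kB hbar ωD U0 N0 ε Tc hkB hU0 hN0 hε hTc hsmall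
end
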